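/- Let G be a connected graph and C = x₁...xₐ a longest cycle in G. Suppose z is a vertex not on C with at least 0.47·d₁ neighbours on C, where a ≤ 1.01·d₁. Then there are at least 0.4·d₁ indices i ∈ [a] such that both x_{i-1} and x_{i+1} (indices mod a) are neighbours of z. -/

import Mathlib

/-!
If `z` were adjacent to two consecutive vertices `x i`, `x (i+1)` of the longest cycle, inserting
`z` between them would give a longer cycle. So the set `N` of positions of neighbours of `z` is
disjoint from its rotations `N + 1` and `N - 1`, which have the same size; inclusion–exclusion
in `Fin a` then gives `|(N + 1) ∩ (N - 1)| ≥ 2|N| - (a - |N|) = 3|N| - a ≥ 1.41 d₁ - 1.01 d₁`.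
-/

/-- Cyclic addition on `Fin a`: `cycAdd i m = (i + m) mod a`. -/
def cycAdd {a : ℕ} (i : Fin a) (m : ℕ) : Fin a :=
  ⟨(i.val + m) % a, Nat.mod_lt _ (Nat.lt_of_le_of_lt (Nat.zero_le _) i.isLt)⟩

open SimpleGraph

section CycAdd

variable {a : ℕ}

lemma cycAdd_zero (i : Fin a) : cycAdd i 0 = i :=
  Fin.ext <| Nat.mod_eq_of_lt i.isLt

lemma cycAdd_self (i : Fin a) : cycAdd i a = i :=
  Fin.ext <| (Nat.add_mod_right _ _).trans (Nat.mod_eq_of_lt i.isLt)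

lemma cycAdd_cycAdd (i : Fin a) (m n : ℕ) : cycAdd (cycAdd i m) n = cycAdd i (m + n) :=
  Fin.ext <| by simp only [cycAdd, Nat.mod_add_mod, Nat.add_assoc]

lemma cycAdd_injOn (i : Fin a) {s t : ℕ} (hs : s < a) (ht : t < a)
    (h : cycAdd i s = cycAdd i t) : s = t := by
  have hmod : s % a = t % a := Nat.ModEq.add_left_cancel' i.val (congrArg Fin.val h)
  rwa [Nat.mod_eq_of_lt hs, Nat.mod_eq_of_lt ht] at hmod

def cycShift (ha : 0 < a) : Equiv.Perm (Fin a) where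
  toFun i := cycAdd i 1
  invFun i := cycAdd i (a - 1)
  left_inv i := by dsimp only; rw [cycAdd_cycAdd, Nat.add_sub_cancel' ha, cycAdd_self]
  right_inv i := by dsimp only; rw [cycAdd_cycAdd, Nat.sub_add_cancel ha, cycAdd_self]

end CycAdd

section CycleArc

variable {V : Type*} {G : SimpleGraph V} {a : ℕ} {x : Fin a → V}
  (hcyc : ∀ i, G.Adj (x i) (x (cycAdd i 1)))

def cycleArc (i : Fin a) : ∀ m : ℕ, G.Walk (x i) (x (cycAdd i m))
  | 0 => Walk.nil.copy rfl (congrArg x (cycAdd_zero i).symm)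
  | m + 1 => (cycleArc i m).concat (cycAdd_cycAdd i m 1 ▸ hcyc (cycAdd i m))

lemma cycleArc_length (i : Fin a) (m : ℕ) : (cycleArc hcyc i m).length = m := by
  induction m with
  | zero => simp [cycleArc]
  | succ m ih => rw [cycleArc, Walk.length_concat, ih]

lemma cycleArc_support (i : Fin a) (m : ℕ) :
    (cycleArc hcyc i m).support = (List.range (m + 1)).map (fun t => x (cycAdd i t)) := by
  induction m with
  | zero => simp [cycleArc, cycAdd_zero]
  | succ m ih => rw [cycleArc, Walk.support_concat, ih]; simp [List.range_succ]

lemma cycleArc_isPath (hinj : Function.Injective x) (i : Fin a) {m : ℕ} (hm : m < a) :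
    (cycleArc hcyc i m).IsPath := by
  rw [Walk.isPath_def, cycleArc_support]
  refine List.nodup_range.map_on fun s hs t ht hst => cycAdd_injOn i ?_ ?_ (hinj hst) <;>
    simp only [List.mem_range] at hs ht <;> omega

end CycleArc

theorem exists_isCycle_length_eq_succ {V : Type*} {G : SimpleGraph V} {a : ℕ} (ha : 2 ≤ a)
    {x : Fin a → V} (hinj : Function.Injective x) (hcyc : ∀ i, G.Adj (x i) (x (cycAdd i 1)))
    {z : V} (hz : ∀ i, z ≠ x i) {i : Fin a} (h₁ : G.Adj z (x i))
    (h₂ : G.Adj z (x (cycAdd i 1))) :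
    ∃ (w : V) (p : G.Walk w w), p.IsCycle ∧ p.length = a + 1 := by
  have hend : cycAdd (cycAdd i 1) (a - 1) = i := by
    rw [cycAdd_cycAdd, Nat.add_sub_cancel' (by omega), cycAdd_self]
  set arc := (cycleArc hcyc (cycAdd i 1) (a - 1)).copy rfl (congrArg x hend)
  have harc : arc.IsPath := (Walk.isPath_copy _ _ _).mpr (cycleArc_isPath hcyc hinj _ (by omega))
  have hz_arc : z ∉ arc.support := by
    simpa [arc, cycleArc_support] using fun t _ => (hz _).symm
  refine ⟨z, .cons h₂ (arc.concat h₁.symm),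
    Walk.isCycle_iff_isPath_tail_and_le_length.mpr ⟨?_, ?_⟩, ?_⟩
  · simpa using harc.concat hz_arc h₁.symm
  all_goals simp only [arc, Walk.length_cons, Walk.length_concat, Walk.length_copy,
    cycleArc_length]; omega

theorem Equiv.Perm.three_mul_ncard_le_card_add_ncard_preimage_inter {α : Type*} [Finite α]
    (σ : Equiv.Perm α) {s : Set α} (hs : ∀ i ∈ s, σ i ∉ s) :
    3 * s.ncard ≤ Nat.card α + (σ.symm ⁻¹' s ∩ σ ⁻¹' s).ncard := by
  have hcard (τ : Equiv.Perm α) : (τ ⁻¹' s).ncard = s.ncard :=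
    Set.ncard_preimage_of_injective_subset_range τ.injective (by simp)
  have hdisj : _root_.Disjoint (σ.symm ⁻¹' s ∪ σ ⁻¹' s) s := by
    refine Set.disjoint_left.mpr fun i hi his => hi.elim (fun h => ?_) (hs i his)
    exact hs _ h (by simpa using his)
  have hunion := Set.ncard_union_add_ncard_inter (σ.symm ⁻¹' s) (σ ⁻¹' s)
  have hle := Set.ncard_le_card (σ.symm ⁻¹' s ∪ σ ⁻¹' s ∪ s)
  rw [Set.ncard_union_eq hdisj] at hle
  rw [hcard, hcard] at hunion
  omega

theorem stmt_17_general {V : Type*} (G : SimpleGraph V)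
    (d₁ : ℝ) (a : ℕ) (ha : 3 ≤ a) (x : Fin a → V) (hinj : Function.Injective x)
    (hcyc : ∀ i : Fin a, G.Adj (x i) (x (cycAdd i 1)))
    (hlongest : ∀ (w : V) (p : G.Walk w w), p.IsCycle → p.length ≤ a)
    (z : V) (hz : ∀ i, z ≠ x i)
    (hnbrs : 0.47 * d₁ ≤ ({i : Fin a | G.Adj z (x i)} : Set (Fin a)).ncard)
    (hsize : (a : ℝ) ≤ 1.01 * d₁) :
    0.4 * d₁ ≤
      (({i : Fin a | G.Adj z (x (cycAdd i (a - 1))) ∧ G.Adj z (x (cycAdd i 1))} :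
        Set (Fin a)).ncard : ℝ) := by
  have hgap : ∀ i, G.Adj z (x i) → ¬ G.Adj z (x (cycAdd i 1)) := fun i h₁ h₂ => by
    obtain ⟨w, p, hp, hlen⟩ := exists_isCycle_length_eq_succ (by omega) hinj hcyc hz h₁ h₂
    have := hlongest w p hp
    omega
  have hcount := (cycShift (by omega : 0 < a)).three_mul_ncard_le_card_add_ncard_preimage_inter
    (s := {i | G.Adj z (x i)}) hgap
  rw [Nat.card_eq_fintype_card, Fintype.card_fin] at hcount
  calc 0.4 * d₁ ≤ 3 * (({i : Fin a | G.Adj z (x i)} : Set (Fin a)).ncard : ℝ) - a := by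
        linarith
    _ ≤ _ := by rw [sub_le_iff_le_add']; exact_mod_cast hcount

/-- Let `G` be a connected graph and let `x₀ x₁ … x_{a-1}` be a longest cycle of `G`
(no cycle of `G` has more than `a` edges). Suppose `z` is a vertex not on the cycle
with at least `0.47·d₁` neighbours on it, and `a ≤ 1.01·d₁`. Then there are at least
`0.4·d₁` positions `i` such that both `x_{i-1}` and `x_{i+1}` (cyclically) are
neighbours of `z`. -/
theorem stmt_17 {V : Type*} [Fintype V] (G : SimpleGraph V) (hconn : G.Connected)
    (d₁ : ℝ) (a : ℕ) (ha : 3 ≤ a) (x : Fin a → V) (hinj : Function.Injective x)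
    (hcyc : ∀ i : Fin a, G.Adj (x i) (x (cycAdd i 1)))
    (hlongest : ∀ (w : V) (p : G.Walk w w), p.IsCycle → p.length ≤ a)
    (z : V) (hz : ∀ i, z ≠ x i)
    (hnbrs : 0.47 * d₁ ≤ ({i : Fin a | G.Adj z (x i)} : Set (Fin a)).ncard)
    (hsize : (a : ℝ) ≤ 1.01 * d₁) :
    0.4 * d₁ ≤
      (({i : Fin a | G.Adj z (x (cycAdd i (a - 1))) ∧ G.Adj z (x (cycAdd i 1))} :
        Set (Fin a)).ncard : ℝ) :=
  stmt_17_general G d₁ a ha x hinj hcyc hlongest z hz hnbrs hsize
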